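/- arXiv:1811.08291 — 8 statements merged into one kernel-verified Lean document; each statement's English description precedes it below -/
import Mathlib

section
/- With the two-phase opinion dynamics defined in the context, the sum of final opinions satisfies Σ_i z^{(2)}_i = Σ_{i,j} c_i b_{ji} + Σ_j x²_j (θ_j/2)(Σ_i c_i b_{ji} + r_j) + Σ_j y²_j (θ_j/2)(Σ_i c_i b_{ji} − r_j) + Σ_i x¹_i (θ_i/2)(1+c_i)(s_i + Σ_j (x²_j + y²_j)(θ_j/2) b_{ji}) − Σ_i y¹_i (θ_i/2)(1−c_i)(s_i + Σ_j (x²_j + y²_j)(θ_j/2) b_{ji}). -/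
/-!
Summing the final opinions weights each node's source term by the column sum `r` of `Δ`, so
`∑ z⁽²⁾ = r ⬝ᵥ u²` for the phase-2 source `u²`. The camp weights are affine in the opinion
`w⁰ z⁽¹⁾`, hence so is the source: `u² = γ ∘ w⁰ ∘ z⁽¹⁾ + δ` with `γ = 1 + (x² + y²) θ / 2`
and `δ = (x² - y²) θ / 2`. As `r ∘ w⁰ ∘ z⁽¹⁾ = b *ᵥ u¹`, this gives
`∑ z⁽²⁾ = γ ⬝ᵥ (b *ᵥ u¹) + δ ⬝ᵥ r`; expanding `u¹ = c + x¹ θ (1 + c) / 2 - y¹ θ (1 - c) / 2`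
yields the formula, whose factor `s + ∑ⱼ (x² + y²) θ b / 2` is `γ ᵥ* b`.
-/

open Matrix

section

variable {ι κ R : Type*} [CommSemiring R]

theorem sum_mulVec_eq_one_vecMul_dotProduct [Fintype ι] [Fintype κ] (A : Matrix ι κ R)
    (v : κ → R) :
    ∑ i, (A *ᵥ v) i = (1 ᵥ* A) ⬝ᵥ v := by
  rw [← one_dotProduct, dotProduct_mulVec]

theorem dotProduct_mul_left_comm [Fintype ι] (u v w : ι → R) :
    u ⬝ᵥ (v * w) = v ⬝ᵥ (u * w) :=
  Finset.sum_congr rfl fun _ _ => mul_left_comm _ _ _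

theorem mulVec_eq_mul_mulVec [Fintype κ] {b Δ : Matrix ι κ R} {d : ι → R}
    (hb : ∀ j i, b j i = d j * Δ j i) (v : κ → R) : b *ᵥ v = d * (Δ *ᵥ v) := by
  ext j
  simp only [mulVec, dotProduct, Pi.mul_apply, Finset.mul_sum, hb, mul_assoc]

theorem one_vecMul_apply [Fintype ι] (A : Matrix ι κ R) (i : κ) :
    (1 ᵥ* A) i = ∑ j, A j i := by
  simp [vecMul, dotProduct]

theorem one_add_vecMul_apply [Fintype ι] (g : ι → R) (A : Matrix ι κ R) (i : κ) :
    ((1 + g) ᵥ* A) i = ∑ j, A j i + ∑ j, g j * A j i := by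
  rw [add_vecMul, Pi.add_apply, one_vecMul_apply]
  rfl

theorem dotProduct_mulVec_eq_sum_mul_vecMul [Fintype ι] [Fintype κ] (γ : ι → R)
    (b : Matrix ι κ R) (v : κ → R) :
    γ ⬝ᵥ (b *ᵥ v) = ∑ i, v i * (γ ᵥ* b) i := by
  rw [dotProduct_mulVec, dotProduct_comm]
  rfl

end

theorem one_add_mul_dotProduct_mulVec_add_sub_mul_dotProduct {ι κ R : Type*} [Fintype ι]
    [Fintype κ] [CommRing R] (b : Matrix ι κ R) (c : κ → R) (r x y t : ι → R) :
    (1 + (x + y) * t) ⬝ᵥ (b *ᵥ c) + ((x - y) * t) ⬝ᵥ r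
      = (∑ i, ∑ j, c i * b j i)
        + (∑ j, x j * t j * ((∑ i, c i * b j i) + r j))
        + (∑ j, y j * t j * ((∑ i, c i * b j i) - r j)) := by
  rw [Finset.sum_comm]
  simp only [dotProduct, mulVec, Pi.add_apply, Pi.sub_apply, Pi.mul_apply, Pi.one_apply,
    ← Finset.sum_add_distrib]
  refine Finset.sum_congr rfl fun j _ => ?_
  simp only [mul_comm (b j _)]
  ring

theorem camp_source_eq_affine {R : Type*} [Field R] (w z θ x y : R) :
    w * z + θ * (1 + w * z) / 2 * x - θ * (1 - w * z) / 2 * y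
      = (1 + (x + y) * (θ / 2)) * (w * z) + (x - y) * (θ / 2) := by
  ring

theorem two_phase_sum_of_final_opinions_general (n : ℕ)
    (w0 θ z0 x1 x2 y1 y2 : Fin n → ℝ)
    (Δ : Matrix (Fin n) (Fin n) ℝ)
    (r : Fin n → ℝ) (hr : ∀ i, r i = ∑ j, Δ j i)
    (c : Fin n → ℝ) (hc : ∀ i, c i = w0 i * z0 i)
    (b : Matrix (Fin n) (Fin n) ℝ) (hb : ∀ j i, b j i = r j * w0 j * Δ j i)
    (s : Fin n → ℝ) (hs : ∀ i, s i = ∑ j, b j i)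
    (w1g w1b : Fin n → ℝ)
    (hw1g : ∀ i, w1g i = θ i * (1 + w0 i * z0 i) / 2)
    (hw1b : ∀ i, w1b i = θ i * (1 - w0 i * z0 i) / 2)
    (z1 : Fin n → ℝ) (hz1 : z1 = Δ.mulVec (w0 * z0 + w1g * x1 - w1b * y1))
    (w2g w2b : Fin n → ℝ)
    (hw2g : ∀ i, w2g i = θ i * (1 + w0 i * z1 i) / 2)
    (hw2b : ∀ i, w2b i = θ i * (1 - w0 i * z1 i) / 2)
    (z2 : Fin n → ℝ) (hz2 : z2 = Δ.mulVec (w0 * z1 + w2g * x2 - w2b * y2)) :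
    ∑ i, z2 i =
      (∑ i, ∑ j, c i * b j i)
      + (∑ j, x2 j * (θ j / 2) * ((∑ i, c i * b j i) + r j))
      + (∑ j, y2 j * (θ j / 2) * ((∑ i, c i * b j i) - r j))
      + (∑ i, x1 i * (θ i / 2) * (1 + c i) *
          (s i + ∑ j, (x2 j + y2 j) * (θ j / 2) * b j i))
      - (∑ i, y1 i * (θ i / 2) * (1 - c i) *
          (s i + ∑ j, (x2 j + y2 j) * (θ j / 2) * b j i)) := by
  set t : Fin n → ℝ := fun j => θ j / 2
  set γ := 1 + (x2 + y2) * t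
  set p : Fin n → ℝ := fun i => x1 i * t i * (1 + c i)
  set q : Fin n → ℝ := fun i => y1 i * t i * (1 - c i)
  have hcolsum : 1 ᵥ* Δ = r := by
    ext i; rw [one_vecMul_apply, hr]
  have hsource1 : w0 * z0 + w1g * x1 - w1b * y1 = c + p - q := by
    ext i
    simp only [Pi.add_apply, Pi.sub_apply, Pi.mul_apply, hw1g, hw1b, hc, p, q, t]
    ring
  have hsource2 : w0 * z1 + w2g * x2 - w2b * y2 = γ * (w0 * z1) + (x2 - y2) * t := by
    ext i
    simp only [Pi.add_apply, Pi.sub_apply, Pi.mul_apply, Pi.one_apply, hw2g, hw2b, γ, t]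
    exact camp_source_eq_affine _ _ _ _ _
  have hphase1 : r * (w0 * z1) = b *ᵥ (c + p - q) := by
    rw [mulVec_eq_mul_mulVec (d := r * w0) hb, ← hsource1, ← hz1, mul_assoc]
  calc ∑ i, z2 i
      = γ ⬝ᵥ (b *ᵥ c) + ((x2 - y2) * t) ⬝ᵥ r + γ ⬝ᵥ (b *ᵥ p) - γ ⬝ᵥ (b *ᵥ q) := by
        rw [hz2, sum_mulVec_eq_one_vecMul_dotProduct, hcolsum, hsource2, dotProduct_add,
          dotProduct_mul_left_comm, hphase1, mulVec_sub, mulVec_add, dotProduct_sub,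
          dotProduct_add, dotProduct_comm r]
        ring
    _ = _ := by
        rw [one_add_mul_dotProduct_mulVec_add_sub_mul_dotProduct,
          dotProduct_mulVec_eq_sum_mul_vecMul γ b p,
          dotProduct_mulVec_eq_sum_mul_vecMul γ b q]
        simp only [γ, one_add_vecMul_apply, ← hs]
        rfl

/-- closed form for the sum of final opinions `∑ i, z⁽²⁾ i` of the
two-phase opinion dynamics. -/
theorem two_phase_sum_of_final_opinions (n : ℕ) (hn : 0 < n)
    (W : Matrix (Fin n) (Fin n) ℝ)
    (hW : ∀ i, ∑ j, |W i j| < 1)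
    (w0 θ z0 x1 x2 y1 y2 : Fin n → ℝ)
    (Δ : Matrix (Fin n) (Fin n) ℝ) (hΔ : Δ = (1 - W)⁻¹)
    (r : Fin n → ℝ) (hr : ∀ i, r i = ∑ j, Δ j i)
    (c : Fin n → ℝ) (hc : ∀ i, c i = w0 i * z0 i)
    (b : Matrix (Fin n) (Fin n) ℝ) (hb : ∀ j i, b j i = r j * w0 j * Δ j i)
    (s : Fin n → ℝ) (hs : ∀ i, s i = ∑ j, b j i)
    (w1g w1b : Fin n → ℝ)
    (hw1g : ∀ i, w1g i = θ i * (1 + w0 i * z0 i) / 2)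
    (hw1b : ∀ i, w1b i = θ i * (1 - w0 i * z0 i) / 2)
    (z1 : Fin n → ℝ) (hz1 : z1 = Δ.mulVec (w0 * z0 + w1g * x1 - w1b * y1))
    (w2g w2b : Fin n → ℝ)
    (hw2g : ∀ i, w2g i = θ i * (1 + w0 i * z1 i) / 2)
    (hw2b : ∀ i, w2b i = θ i * (1 - w0 i * z1 i) / 2)
    (z2 : Fin n → ℝ) (hz2 : z2 = Δ.mulVec (w0 * z1 + w2g * x2 - w2b * y2)) :
    ∑ i, z2 i =
      (∑ i, ∑ j, c i * b j i)
      + (∑ j, x2 j * (θ j / 2) * ((∑ i, c i * b j i) + r j))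
      + (∑ j, y2 j * (θ j / 2) * ((∑ i, c i * b j i) - r j))
      + (∑ i, x1 i * (θ i / 2) * (1 + c i) *
          (s i + ∑ j, (x2 j + y2 j) * (θ j / 2) * b j i))
      - (∑ i, y1 i * (θ i / 2) * (1 - c i) *
          (s i + ∑ j, (x2 j + y2 j) * (θ j / 2) * b j i)) :=
  two_phase_sum_of_final_opinions_general n w0 θ z0 x1 x2 y1 y2 Δ r hr c hc b hb s hs w1g w1b hw1g
    hw1b z1 hz1 w2g w2b hw2g hw2b z2 hz2
end

section
/- (Proposition 1.) Consider the non-competitive two-phase problem of maximizing F₁(x¹, x²) := F(x¹, x², 0, 0) over the feasible set {(x¹, x²) ∈ ℝⁿ × ℝⁿ : x¹_i ≥ 0 and x²_i ≥ 0 for all i, and Σ_i (x¹_i + x²_i) ≤ k_g}, where k_g > 0. Then the maximum is attained, and it is attained at some point (x¹, x²) such that x¹ has at most one nonzero coordinate, x² has at most one nonzero coordinate, and either Σ_i (x¹_i + x²_i) = k_g or x¹ = x² = 0. -/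
/-!
For fixed `x²` the objective `F(x¹, x², 0, 0)` is affine in `x¹`, and for fixed `x¹` it is affine
in `x²`. Moving all of a phase's budget onto the coordinate with the largest coefficient therefore
never decreases it, so concentrating a maximizer (which exists by compactness) first in `x¹` and
then in `x²` gives a maximizer with at most one nonzero coordinate per phase and the same total.
If that maximizer leaves budget unspent, the leftover could be added to any single coordinate, so
every coefficient of `x²`, and then every coefficient of `x¹` at `x² = 0`, is nonpositive: investing
nothing is then optimal as well.
-/

/-- The two-phase objective function `F(x¹,x²,y¹,y²)` (the sum of final opinions). -/
noncomputable def twoPhaseF (n : ℕ) (θ c r s : Fin n → ℝ)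
    (b : Matrix (Fin n) (Fin n) ℝ) (x1 x2 y1 y2 : Fin n → ℝ) : ℝ :=
  (∑ i, ∑ j, c i * b j i)
  + (∑ j, x2 j * (θ j / 2) * ((∑ i, c i * b j i) + r j))
  + (∑ j, y2 j * (θ j / 2) * ((∑ i, c i * b j i) - r j))
  + (∑ i, x1 i * (θ i / 2) * (1 + c i) *
      (s i + ∑ j, (x2 j + y2 j) * (θ j / 2) * b j i))
  - (∑ i, y1 i * (θ i / 2) * (1 - c i) *
      (s i + ∑ j, (x2 j + y2 j) * (θ j / 2) * b j i))

open Matrix Function Finset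

section

variable {ι : Type*} [Fintype ι]

def budgetSet (k : ℝ) : Set ((ι → ℝ) × (ι → ℝ)) :=
  {p | 0 ≤ p.1 ∧ 0 ≤ p.2 ∧ ∑ i, (p.1 i + p.2 i) ≤ k}

theorem isCompact_budgetSet (k : ℝ) : IsCompact (budgetSet (ι := ι) k) := by
  refine (isCompact_Icc (a := 0) (b := (fun _ => k, fun _ => k))).of_isClosed_subset ?_ ?_
  · have hsum : Continuous fun p : (ι → ℝ) × (ι → ℝ) => ∑ i, (p.1 i + p.2 i) := by fun_prop
    exact (isClosed_le continuous_const continuous_fst).inter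
      ((isClosed_le continuous_const continuous_snd).inter (isClosed_le hsum continuous_const))
  · rintro ⟨x, y⟩ ⟨hx, hy, hsum⟩
    have hle (i : ι) : x i + y i ≤ k :=
      (single_le_sum (fun j _ => add_nonneg (hx j) (hy j)) (mem_univ i)).trans hsum
    exact ⟨⟨hx, hy⟩, fun i => (le_add_of_nonneg_right (hy i)).trans (hle i),
      fun i => (le_add_of_nonneg_left (hx i)).trans (hle i)⟩

theorem add_single_mem_budgetSet_right [DecidableEq ι] {k : ℝ} {x y : ι → ℝ}
    (hmem : (x, y) ∈ budgetSet k) (j : ι) :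
    (x, y + Pi.single j (k - ∑ l, (x l + y l))) ∈ budgetSet k := by
  obtain ⟨hx, hy, hsum⟩ := hmem
  refine ⟨hx, add_nonneg hy (Pi.single_nonneg.2 (sub_nonneg.2 hsum)), ?_⟩
  simp only [sum_add_distrib, Pi.add_apply, sum_pi_single', mem_univ, ↓reduceIte]
  linarith

theorem add_single_mem_budgetSet_left [DecidableEq ι] {k : ℝ} {x y : ι → ℝ}
    (hmem : (x, y) ∈ budgetSet k) (i : ι) :
    (x + Pi.single i (k - ∑ l, (x l + y l)), y) ∈ budgetSet k := by
  obtain ⟨hx, hy, hsum⟩ := hmem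
  refine ⟨add_nonneg hx (Pi.single_nonneg.2 (sub_nonneg.2 hsum)), hy, ?_⟩
  simp only [sum_add_distrib, Pi.add_apply, sum_pi_single', mem_univ, ↓reduceIte]
  linarith

theorem exists_dotProduct_le_single_sum [DecidableEq ι] [Nonempty ι] (v : ι → ℝ) {x : ι → ℝ}
    (hx : 0 ≤ x) : ∃ i, x ⬝ᵥ v ≤ Pi.single i (∑ j, x j) ⬝ᵥ v := by
  obtain ⟨i, -, hi⟩ := exists_max_image univ v univ_nonempty
  refine ⟨i, ?_⟩
  rw [single_dotProduct, sum_mul]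
  exact sum_le_sum fun j _ => mul_le_mul_of_nonneg_left (hi j (mem_univ j)) (hx j)

theorem dotProduct_nonpos_of_add_single_le [DecidableEq ι] {x v : ι → ℝ} (hx : 0 ≤ x) {t : ℝ}
    (ht : 0 < t) (h : ∀ j, (x + Pi.single j t) ⬝ᵥ v ≤ x ⬝ᵥ v) : x ⬝ᵥ v ≤ 0 := by
  refine sum_nonpos fun j _ => mul_nonpos_of_nonneg_of_nonpos (hx j) ?_
  have := h j
  rw [add_dotProduct, single_dotProduct] at this
  nlinarith

def biaffine (K : ℝ) (α β : ι → ℝ) (M : Matrix ι ι ℝ) (x y : ι → ℝ) : ℝ :=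
  K + x ⬝ᵥ α + y ⬝ᵥ β + x ⬝ᵥ (M *ᵥ y)

namespace biaffine

variable {K : ℝ} {α β : ι → ℝ} {M : Matrix ι ι ℝ}

theorem eq_add_dotProduct_left (x y : ι → ℝ) :
    biaffine K α β M x y = K + y ⬝ᵥ β + x ⬝ᵥ (α + M *ᵥ y) := by
  rw [biaffine, dotProduct_add]; ring

theorem eq_add_dotProduct_right (x y : ι → ℝ) :
    biaffine K α β M x y = K + x ⬝ᵥ α + y ⬝ᵥ (β + x ᵥ* M) := by
  rw [biaffine, dotProduct_add, dotProduct_mulVec, dotProduct_comm (x ᵥ* M)]; ring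

theorem continuous_uncurry : Continuous (uncurry (biaffine K α β M)) := by
  unfold biaffine; fun_prop

theorem exists_le_single_single [DecidableEq ι] [Nonempty ι] {x y : ι → ℝ} (hx : 0 ≤ x)
    (hy : 0 ≤ y) : ∃ i j, biaffine K α β M x y ≤
      biaffine K α β M (Pi.single i (∑ l, x l) : ι → ℝ) (Pi.single j (∑ l, y l) : ι → ℝ) := by
  obtain ⟨i, hi⟩ := exists_dotProduct_le_single_sum (α + M *ᵥ y) hx
  set x' : ι → ℝ := Pi.single i (∑ l, x l)
  obtain ⟨j, hj⟩ := exists_dotProduct_le_single_sum (β + x' ᵥ* M) hy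
  refine ⟨i, j, ?_⟩
  calc biaffine K α β M x y ≤ biaffine K α β M x' y := by
        rw [eq_add_dotProduct_left, eq_add_dotProduct_left]; gcongr
    _ ≤ _ := by rw [eq_add_dotProduct_right, eq_add_dotProduct_right x']; gcongr

theorem le_zero_right_of_isMaxOn [DecidableEq ι] {k : ℝ} {x y : ι → ℝ}
    (hmem : (x, y) ∈ budgetSet k)
    (hmax : IsMaxOn (uncurry (biaffine K α β M)) (budgetSet k) (x, y))
    (hslack : ∑ i, (x i + y i) < k) : biaffine K α β M x y ≤ biaffine K α β M x 0 := by
  rw [eq_add_dotProduct_right, eq_add_dotProduct_right x, zero_dotProduct, add_zero]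
  refine add_le_of_nonpos_right (dotProduct_nonpos_of_add_single_le hmem.2.1 (sub_pos.2 hslack)
    fun j => ?_)
  have : biaffine K α β M x (y + Pi.single j _) ≤ biaffine K α β M x y :=
    isMaxOn_iff.mp hmax _ (add_single_mem_budgetSet_right hmem j)
  rwa [eq_add_dotProduct_right, eq_add_dotProduct_right x, add_le_add_iff_left] at this

theorem le_zero_left_of_isMaxOn [DecidableEq ι] {k : ℝ} {x y : ι → ℝ}
    (hmem : (x, y) ∈ budgetSet k)
    (hmax : IsMaxOn (uncurry (biaffine K α β M)) (budgetSet k) (x, y))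
    (hslack : ∑ i, (x i + y i) < k) : biaffine K α β M x y ≤ biaffine K α β M 0 y := by
  rw [eq_add_dotProduct_left, eq_add_dotProduct_left 0, zero_dotProduct, add_zero]
  refine add_le_of_nonpos_right (dotProduct_nonpos_of_add_single_le hmem.1 (sub_pos.2 hslack)
    fun i => ?_)
  have : biaffine K α β M (x + Pi.single i _) y ≤ biaffine K α β M x y :=
    isMaxOn_iff.mp hmax _ (add_single_mem_budgetSet_left hmem i)
  rwa [eq_add_dotProduct_left, eq_add_dotProduct_left x, add_le_add_iff_left] at this

theorem le_zero_zero_of_isMaxOn [DecidableEq ι] {k : ℝ} {x y : ι → ℝ}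
    (hmem : (x, y) ∈ budgetSet k)
    (hmax : IsMaxOn (uncurry (biaffine K α β M)) (budgetSet k) (x, y))
    (hslack : ∑ i, (x i + y i) < k) : biaffine K α β M x y ≤ biaffine K α β M 0 0 := by
  have hy := le_zero_right_of_isMaxOn hmem hmax hslack
  have hslack' : ∑ i, (x i + (0 : ι → ℝ) i) < k := by
    simp only [Pi.zero_apply, add_zero]
    exact (sum_le_sum fun i _ => le_add_of_nonneg_right (hmem.2.1 i)).trans_lt hslack
  have hmem' : (x, (0 : ι → ℝ)) ∈ budgetSet k := ⟨hmem.1, le_rfl, hslack'.le⟩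
  have hmax' : IsMaxOn (uncurry (biaffine K α β M)) (budgetSet k) (x, 0) :=
    isMaxOn_iff.2 fun p hp => (isMaxOn_iff.1 hmax p hp).trans hy
  exact hy.trans (le_zero_left_of_isMaxOn hmem' hmax' hslack')

theorem exists_isMaxOn_budgetSet [DecidableEq ι] [Nonempty ι] {k : ℝ} (hk : 0 ≤ k) :
    ∃ x y : ι → ℝ, (x, y) ∈ budgetSet k ∧
      IsMaxOn (uncurry (biaffine K α β M)) (budgetSet k) (x, y) ∧
      (support x).Subsingleton ∧ (support y).Subsingleton ∧
      (∑ i, (x i + y i) = k ∨ x = 0 ∧ y = 0) := by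
  have hzero : ((0 : ι → ℝ), (0 : ι → ℝ)) ∈ budgetSet k := ⟨le_rfl, le_rfl, by simpa using hk⟩
  obtain ⟨⟨x, y⟩, hmem, hmax⟩ :=
    (isCompact_budgetSet k).exists_isMaxOn ⟨_, hzero⟩ continuous_uncurry.continuousOn
  obtain ⟨i, j, hle⟩ := exists_le_single_single (K := K) (α := α) (β := β) (M := M)
    hmem.1 hmem.2.1
  set x' : ι → ℝ := Pi.single i (∑ l, x l)
  set y' : ι → ℝ := Pi.single j (∑ l, y l)
  have hsum : ∑ l, (x' l + y' l) = ∑ l, (x l + y l) := by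
    simp only [x', y', sum_add_distrib, sum_pi_single', mem_univ, ↓reduceIte]
  have hmem' : (x', y') ∈ budgetSet k :=
    ⟨Pi.single_nonneg.2 (sum_nonneg fun l _ => hmem.1 l),
      Pi.single_nonneg.2 (sum_nonneg fun l _ => hmem.2.1 l), hsum ▸ hmem.2.2⟩
  have hmax' : IsMaxOn (uncurry (biaffine K α β M)) (budgetSet k) (x', y') :=
    isMaxOn_iff.2 fun p hp => (isMaxOn_iff.1 hmax p hp).trans hle
  rcases hmem'.2.2.eq_or_lt with hfull | hslack
  · exact ⟨x', y', hmem', hmax', Set.subsingleton_singleton.anti Pi.support_single_subset,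
      Set.subsingleton_singleton.anti Pi.support_single_subset, Or.inl hfull⟩
  · refine ⟨0, 0, hzero, isMaxOn_iff.2 fun p hp => ?_, by simp, by simp, Or.inr ⟨rfl, rfl⟩⟩
    exact (isMaxOn_iff.1 hmax' p hp).trans (le_zero_zero_of_isMaxOn hmem' hmax' hslack)

end biaffine

end

theorem twoPhaseF_eq_biaffine {n : ℕ} (θ c r s : Fin n → ℝ) (b : Matrix (Fin n) (Fin n) ℝ)
    (x1 x2 : Fin n → ℝ) :
    twoPhaseF n θ c r s b x1 x2 0 0 =
      biaffine (∑ i, ∑ j, c i * b j i) (fun i => θ i / 2 * (1 + c i) * s i)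
        (fun j => θ j / 2 * ((∑ i, c i * b j i) + r j))
        (Matrix.of fun i j => θ i / 2 * (1 + c i) * (θ j / 2 * b j i)) x1 x2 := by
  simp only [twoPhaseF, biaffine, dotProduct, mulVec, of_apply, Pi.zero_apply, add_zero,
    zero_mul, sum_const_zero, sub_zero]
  have hx1 : ∑ i, x1 i * (θ i / 2) * (1 + c i) * (s i + ∑ j, x2 j * (θ j / 2) * b j i) =
      ∑ i, x1 i * (θ i / 2 * (1 + c i) * s i) +
        ∑ i, x1 i * ∑ j, θ i / 2 * (1 + c i) * (θ j / 2 * b j i) * x2 j := by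
    rw [← sum_add_distrib]
    refine sum_congr rfl fun i _ => ?_
    simp only [mul_add, mul_sum]
    congr 1
    · ring
    · exact sum_congr rfl fun j _ => by ring
  have hx2 : ∑ j, x2 j * (θ j / 2) * ((∑ i, c i * b j i) + r j) =
      ∑ j, x2 j * (θ j / 2 * ((∑ i, c i * b j i) + r j)) :=
    sum_congr rfl fun j _ => mul_assoc _ _ _
  rw [hx1, hx2]
  ring

theorem prop1_single_camp_general (n : ℕ) (hn : 0 < n)
    (θ : Fin n → ℝ)
    (r : Fin n → ℝ)
    (c : Fin n → ℝ)
    (b : Matrix (Fin n) (Fin n) ℝ)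
    (s : Fin n → ℝ)
    (kg : ℝ) (hkg : 0 < kg) :
    ∃ x1 x2 : Fin n → ℝ,
      (∀ i, 0 ≤ x1 i) ∧ (∀ i, 0 ≤ x2 i) ∧ (∑ i, (x1 i + x2 i)) ≤ kg ∧
      (∀ x1' x2' : Fin n → ℝ,
        (∀ i, 0 ≤ x1' i) → (∀ i, 0 ≤ x2' i) → (∑ i, (x1' i + x2' i)) ≤ kg →
        twoPhaseF n θ c r s b x1' x2' 0 0 ≤ twoPhaseF n θ c r s b x1 x2 0 0) ∧
      (∀ i j, x1 i ≠ 0 → x1 j ≠ 0 → i = j) ∧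
      (∀ i j, x2 i ≠ 0 → x2 j ≠ 0 → i = j) ∧
      ((∑ i, (x1 i + x2 i)) = kg ∨ (x1 = 0 ∧ x2 = 0)) := by
  have : Nonempty (Fin n) := Fin.pos_iff_nonempty.mp hn
  obtain ⟨x1, x2, ⟨h1, h2, hsum⟩, hmax, hx1, hx2, hcases⟩ :=
    biaffine.exists_isMaxOn_budgetSet (K := ∑ i, ∑ j, c i * b j i)
      (α := fun i => θ i / 2 * (1 + c i) * s i) (β := fun j => θ j / 2 * ((∑ i, c i * b j i) + r j))
      (M := Matrix.of fun i j => θ i / 2 * (1 + c i) * (θ j / 2 * b j i)) hkg.le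
  refine ⟨x1, x2, h1, h2, hsum, fun x1' x2' h1' h2' hsum' => ?_,
    fun i j hi hj => hx1 hi hj, fun i j hi hj => hx2 hi hj, hcases⟩
  rw [twoPhaseF_eq_biaffine, twoPhaseF_eq_biaffine]
  exact isMaxOn_iff.mp hmax (x1', x2') ⟨h1', h2', hsum'⟩

/-- Proposition 1: in the non-competitive case, the maximum of
`F(x¹,x²,0,0)` over the budget-feasible set is attained at a point where each
phase's investment vector has at most one nonzero coordinate, and either the
whole budget is exhausted or nothing is invested at all. -/
theorem prop1_single_camp (n : ℕ) (hn : 0 < n)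
    (W : Matrix (Fin n) (Fin n) ℝ)
    (hW : ∀ i, ∑ j, |W i j| < 1)
    (w0 θ z0 : Fin n → ℝ)
    (Δ : Matrix (Fin n) (Fin n) ℝ) (hΔ : Δ = (1 - W)⁻¹)
    (r : Fin n → ℝ) (hr : ∀ i, r i = ∑ j, Δ j i)
    (c : Fin n → ℝ) (hc : ∀ i, c i = w0 i * z0 i)
    (b : Matrix (Fin n) (Fin n) ℝ) (hb : ∀ j i, b j i = r j * w0 j * Δ j i)
    (s : Fin n → ℝ) (hs : ∀ i, s i = ∑ j, b j i)
    (kg : ℝ) (hkg : 0 < kg) :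
    ∃ x1 x2 : Fin n → ℝ,
      (∀ i, 0 ≤ x1 i) ∧ (∀ i, 0 ≤ x2 i) ∧ (∑ i, (x1 i + x2 i)) ≤ kg ∧
      (∀ x1' x2' : Fin n → ℝ,
        (∀ i, 0 ≤ x1' i) → (∀ i, 0 ≤ x2' i) → (∑ i, (x1' i + x2' i)) ≤ kg →
        twoPhaseF n θ c r s b x1' x2' 0 0 ≤ twoPhaseF n θ c r s b x1 x2 0 0) ∧
      (∀ i j, x1 i ≠ 0 → x1 j ≠ 0 → i = j) ∧
      (∀ i j, x2 i ≠ 0 → x2 j ≠ 0 → i = j) ∧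
      ((∑ i, (x1 i + x2 i)) = kg ∨ (x1 = 0 ∧ x2 = 0)) :=
  prop1_single_camp_general n hn θ r c b s kg hkg
end

section
/- Fix nodes α, β and total budget k_g > 0, and define h : ℝ → ℝ by h(k₁) = Σ_{i,j} c_i b_{ji} + k₁ (θ_α/2)(1 + c_α) s_α + (k_g − k₁)(θ_β/2)(Σ_i c_i b_{βi} + r_β) + k₁ (k_g − k₁)(θ_α θ_β/4)(1 + c_α) b_{βα}, the single-camp two-phase objective when the camp invests k₁ on node α in the first phase and k_g − k₁ on node β in the second phase. If θ_α θ_β (1 + c_α) b_{βα} > 0, then h is a strictly concave quadratic, and its maximum over the interval [0, k_g] is attained at the unique point k₁* = min{ max{ k_g/2 + s_α/(θ_β b_{βα}) − (Σ_i c_i b_{βi} + r_β)/(θ_α b_{βα} (1 + c_α)), 0 }, k_g }. -/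
/-!
Expanding the products shows that `h` is a quadratic with leading coefficient
`-θ_α θ_β (1 + c_α) b_{βα} / 4 < 0` and vertex at the unclamped expression `v` inside
`k₁*`, i.e. `h t = A (t - v)² + h v` with `A < 0`. Maximizing over `[0, k_g]` therefore
means minimizing `(t - v)²` there, and the clamp `p = min (max v 0) k_g` is the nearest
point: `(t - p)(p - v) ≥ 0` for every `t` in the interval, which gives
`h t ≤ h p + A (t - p)²`.
-/

open Set

section VertexForm

variable {A v D : ℝ}

theorem strictConcaveOn_vertexForm (hA : A < 0) :
    StrictConcaveOn ℝ univ (fun t : ℝ => A * (t - v) ^ 2 + D) := by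
  refine ⟨convex_univ, fun x _ y _ hxy a b ha hb hab => ?_⟩
  obtain rfl : b = 1 - a := by linarith
  have hgap : 0 < -A * a * (1 - a) * (x - y) ^ 2 := by
    have := sub_ne_zero.mpr hxy
    have := neg_pos.mpr hA
    positivity
  simp only [smul_eq_mul]
  nlinarith [hgap]

theorem min_max_mem_Icc {lo hi : ℝ} (hlo : lo ≤ hi) : min (max v lo) hi ∈ Icc lo hi :=
  ⟨le_min (le_max_right _ _) hlo, min_le_right _ _⟩

theorem sub_mul_min_max_sub_nonneg {lo hi t : ℝ} (ht : t ∈ Icc lo hi) :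
    0 ≤ (t - min (max v lo) hi) * (min (max v lo) hi - v) := by
  obtain ⟨htlo, hthi⟩ := ht
  rcases le_total v lo with hv | hv
  · rw [max_eq_right hv, min_eq_left (htlo.trans hthi)]
    nlinarith
  rcases le_total v hi with hv' | hv'
  · simp [max_eq_left hv, min_eq_left hv']
  · rw [max_eq_left hv, min_eq_right hv']
    nlinarith

theorem vertexForm_le_min_max_add {lo hi t : ℝ} (hA : A ≤ 0) (ht : t ∈ Icc lo hi) :
    A * (t - v) ^ 2 + D ≤
      A * (min (max v lo) hi - v) ^ 2 + D + A * (t - min (max v lo) hi) ^ 2 := by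
  nlinarith [mul_nonpos_of_nonpos_of_nonneg hA (sub_mul_min_max_sub_nonneg (v := v) ht)]

end VertexForm

theorem single_camp_optimal_budget_split_general (n : ℕ)
    (θ : Fin n → ℝ)
    (r : Fin n → ℝ)
    (c : Fin n → ℝ)
    (b : Matrix (Fin n) (Fin n) ℝ)
    (s : Fin n → ℝ)
    (α β : Fin n) (kg : ℝ) (hkg : 0 < kg)
    (h : ℝ → ℝ)
    (hh : ∀ k₁ : ℝ, h k₁ =
      (∑ i, ∑ j, c i * b j i)
      + k₁ * (θ α / 2) * (1 + c α) * s α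
      + (kg - k₁) * (θ β / 2) * ((∑ i, c i * b β i) + r β)
      + k₁ * (kg - k₁) * (θ α * θ β / 4) * (1 + c α) * b β α)
    (hpos : 0 < θ α * θ β * (1 + c α) * b β α)
    (k₁star : ℝ)
    (hk₁star : k₁star =
      min (max (kg / 2 + s α / (θ β * b β α)
        - ((∑ i, c i * b β i) + r β) / (θ α * b β α * (1 + c α))) 0) kg) :
    (∃ A B C : ℝ, A < 0 ∧ ∀ t : ℝ, h t = A * t ^ 2 + B * t + C) ∧
    StrictConcaveOn ℝ Set.univ h ∧
    k₁star ∈ Set.Icc 0 kg ∧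
    (∀ k₁ ∈ Set.Icc 0 kg, h k₁ ≤ h k₁star) ∧
    (∀ k₁ ∈ Set.Icc 0 kg, h k₁ = h k₁star → k₁ = k₁star) := by
  set A := -(θ α * θ β * (1 + c α) * b β α / 4) with hA_def
  set v := kg / 2 + s α / (θ β * b β α)
    - ((∑ i, c i * b β i) + r β) / (θ α * b β α * (1 + c α)) with hv
  have hA : A < 0 := by linarith
  have hne := hpos.ne'
  simp only [ne_eq, mul_eq_zero, not_or] at hne
  obtain ⟨⟨⟨hθα, hθβ⟩, hcα⟩, hbβα⟩ := hne
  have hvertex : h = fun t => A * (t - v) ^ 2 + h v := by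
    ext t
    rw [hh t, hh v, hv, hA_def]
    field_simp
    ring
  have hbound : ∀ t ∈ Icc 0 kg, h t ≤ h k₁star + A * (t - k₁star) ^ 2 := by
    intro t ht
    rw [hk₁star, hvertex]
    exact vertexForm_le_min_max_add hA.le ht
  refine ⟨⟨A, -2 * A * v, A * v ^ 2 + h v, hA, fun t => by rw [hvertex]; ring⟩,
    hvertex ▸ strictConcaveOn_vertexForm hA, hk₁star ▸ min_max_mem_Icc hkg.le,
    fun t ht => ?_, fun t ht heq => ?_⟩
  · nlinarith [hbound t ht, sq_nonneg (t - k₁star)]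
  · have hsq : (t - k₁star) ^ 2 = 0 := by nlinarith [hbound t ht, sq_nonneg (t - k₁star)]
    exact sub_eq_zero.mp (pow_eq_zero_iff two_ne_zero |>.mp hsq)

/-- for fixed nodes `α, β` and budget `kg > 0`, the single-camp
two-phase objective `h(k₁)` (invest `k₁` on `α` in phase 1 and `kg - k₁` on `β`
in phase 2) is, under `θ_α θ_β (1+c_α) b_{βα} > 0`, a strictly concave quadratic
whose maximum over `[0, kg]` is attained at the unique point
`k₁* = min (max (kg/2 + s_α/(θ_β b_{βα}) − (∑_i c_i b_{βi} + r_β)/(θ_α b_{βα}(1+c_α))) 0) kg`. -/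
theorem single_camp_optimal_budget_split (n : ℕ) (hn : 0 < n)
    (W : Matrix (Fin n) (Fin n) ℝ)
    (hW : ∀ i, ∑ j, |W i j| < 1)
    (w0 θ z0 : Fin n → ℝ)
    (Δ : Matrix (Fin n) (Fin n) ℝ) (hΔ : Δ = (1 - W)⁻¹)
    (r : Fin n → ℝ) (hr : ∀ i, r i = ∑ j, Δ j i)
    (c : Fin n → ℝ) (hc : ∀ i, c i = w0 i * z0 i)
    (b : Matrix (Fin n) (Fin n) ℝ) (hb : ∀ j i, b j i = r j * w0 j * Δ j i)
    (s : Fin n → ℝ) (hs : ∀ i, s i = ∑ j, b j i)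
    (α β : Fin n) (kg : ℝ) (hkg : 0 < kg)
    (h : ℝ → ℝ)
    (hh : ∀ k₁ : ℝ, h k₁ =
      (∑ i, ∑ j, c i * b j i)
      + k₁ * (θ α / 2) * (1 + c α) * s α
      + (kg - k₁) * (θ β / 2) * ((∑ i, c i * b β i) + r β)
      + k₁ * (kg - k₁) * (θ α * θ β / 4) * (1 + c α) * b β α)
    (hpos : 0 < θ α * θ β * (1 + c α) * b β α)
    (k₁star : ℝ)
    (hk₁star : k₁star =
      min (max (kg / 2 + s α / (θ β * b β α)
        - ((∑ i, c i * b β i) + r β) / (θ α * b β α * (1 + c α))) 0) kg) :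
    (∃ A B C : ℝ, A < 0 ∧ ∀ t : ℝ, h t = A * t ^ 2 + B * t + C) ∧
    StrictConcaveOn ℝ Set.univ h ∧
    k₁star ∈ Set.Icc 0 kg ∧
    (∀ k₁ ∈ Set.Icc 0 kg, h k₁ ≤ h k₁star) ∧
    (∀ k₁ ∈ Set.Icc 0 kg, h k₁ = h k₁star → k₁ = k₁star) :=
  single_camp_optimal_budget_split_general n θ r c b s α β kg hkg h hh hpos k₁star hk₁star
end

section
/- (Proposition 2, bad camp.) Fix any x¹, x² ∈ ℝⁿ and k_b > 0. The minimum of (y¹, y²) ↦ F(x¹, x², y¹, y²) over the feasible set {(y¹, y²) ∈ ℝⁿ × ℝⁿ : y¹_i ≥ 0 and y²_i ≥ 0 for all i, and Σ_i (y¹_i + y²_i) ≤ k_b} is attained, and it is attained at some point (y¹, y²) such that y¹ has at most one nonzero coordinate, y² has at most one nonzero coordinate, and either Σ_i (y¹_i + y²_i) = k_b or y¹ = y² = 0. -/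
/-!
For fixed `x¹, x²`, the objective is affine in `y¹` for each fixed `y²` and affine in `y²` for
each fixed `y¹`. An affine function on the budget simplex `{y ≥ 0, ∑ y ≤ B}` is minimized at `0`
or at a vertex `B • eᵢ`. Starting from a minimizer over the compact feasible set, first move
`y¹` to such a vertex of the budget left over by `y²`, then `y²` to a vertex of the budget left
over by the new `y¹`. If `y²` lands on `0`, the budget need not be exhausted yet, so `y¹` is
moved once more, now within the whole budget. None of these moves increases the objective.
-/

open Finset Function

section BudgetSimplex

variable {ι : Type*} [Fintype ι]

theorem exists_sparse_dotProduct_le (q : ι → ℝ) {B : ℝ} {a : ι → ℝ} (ha : ∀ i, 0 ≤ a i)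
    (haB : ∑ i, a i ≤ B) :
    ∃ y : ι → ℝ, (∀ i, 0 ≤ y i) ∧ ∑ i, y i ≤ B ∧ (support y).Subsingleton ∧
      (y = 0 ∨ ∑ i, y i = B) ∧ y ⬝ᵥ q ≤ a ⬝ᵥ q := by
  classical
  have hB : 0 ≤ B := (sum_nonneg fun i _ => ha i).trans haB
  by_cases hq : ∀ i, 0 ≤ q i
  · refine ⟨0, fun _ => le_rfl, by simpa using hB, by simp, Or.inl rfl, ?_⟩
    rw [zero_dotProduct]
    exact sum_nonneg fun i _ => mul_nonneg (ha i) (hq i)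
  push Not at hq
  obtain ⟨i₁, hi₁⟩ := hq
  have : Nonempty ι := ⟨i₁⟩
  obtain ⟨i₀, hi₀⟩ := Finite.exists_min q
  have hsum : ∑ i, Pi.single i₀ B i = B := Fintype.sum_pi_single' i₀ B
  refine ⟨Pi.single i₀ B, fun i => ?_, hsum.le,
    Set.subsingleton_singleton.anti Pi.support_single_subset, Or.inr hsum, ?_⟩
  · rw [Pi.single_apply]
    split_ifs <;> simp [hB]
  calc Pi.single i₀ B ⬝ᵥ q = B * q i₀ := single_dotProduct q B i₀
    _ ≤ (∑ i, a i) * q i₀ := mul_le_mul_of_nonpos_right haB ((hi₀ i₁).trans hi₁.le)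
    _ = ∑ i, a i * q i₀ := sum_mul _ _ _
    _ ≤ a ⬝ᵥ q := sum_le_sum fun i _ => mul_le_mul_of_nonneg_left (hi₀ i) (ha i)

theorem exists_sparse_le_of_affine {f : (ι → ℝ) → ℝ} (hf : ∃ q, ∀ y, f y = f 0 + y ⬝ᵥ q)
    {B : ℝ} {a : ι → ℝ} (ha : ∀ i, 0 ≤ a i) (haB : ∑ i, a i ≤ B) :
    ∃ y : ι → ℝ, (∀ i, 0 ≤ y i) ∧ ∑ i, y i ≤ B ∧ (support y).Subsingleton ∧
      (y = 0 ∨ ∑ i, y i = B) ∧ f y ≤ f a := by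
  obtain ⟨q, hq⟩ := hf
  obtain ⟨y, hy, hyB, hy_supp, hy_ext, hy_le⟩ := exists_sparse_dotProduct_le q ha haB
  exact ⟨y, hy, hyB, hy_supp, hy_ext, by rw [hq y, hq a]; gcongr⟩

end BudgetSimplex

section TwoPhaseBudget

variable (ι : Type*) [Fintype ι]

def twoPhaseBudgetSet (B : ℝ) : Set ((ι → ℝ) × (ι → ℝ)) :=
  {p | (∀ i, 0 ≤ p.1 i) ∧ (∀ i, 0 ≤ p.2 i) ∧ ∑ i, (p.1 i + p.2 i) ≤ B}

theorem zero_mem_twoPhaseBudgetSet {B : ℝ} (hB : 0 ≤ B) : 0 ∈ twoPhaseBudgetSet ι B :=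
  ⟨fun _ => le_rfl, fun _ => le_rfl, by simpa using hB⟩

theorem twoPhaseBudgetSet_subset_Icc (B : ℝ) :
    twoPhaseBudgetSet ι B ⊆ Set.Icc 0 (fun _ => B, fun _ => B) := by
  rintro ⟨y₁, y₂⟩ ⟨hy₁, hy₂, hB⟩
  have hle : ∀ i, y₁ i + y₂ i ≤ B := fun i =>
    (single_le_sum (fun j _ => add_nonneg (hy₁ j) (hy₂ j)) (mem_univ i)).trans hB
  exact ⟨⟨hy₁, hy₂⟩, fun i => by linarith [hle i, hy₂ i], fun i => by linarith [hle i, hy₁ i]⟩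

theorem isCompact_twoPhaseBudgetSet (B : ℝ) : IsCompact (twoPhaseBudgetSet ι B) := by
  refine isCompact_Icc.of_isClosed_subset ?_ (twoPhaseBudgetSet_subset_Icc ι B)
  simp only [twoPhaseBudgetSet, Set.ofPred_and, Set.ofPred_forall]
  refine .inter (isClosed_iInter fun i => isClosed_le continuous_const (by fun_prop)) <|
    .inter (isClosed_iInter fun i => isClosed_le continuous_const (by fun_prop)) ?_
  exact isClosed_le (by fun_prop) continuous_const

variable {ι}

theorem exists_sparse_le_of_biaffine {F : (ι → ℝ) → (ι → ℝ) → ℝ}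
    (hF₁ : ∀ y₂, ∃ q, ∀ y₁, F y₁ y₂ = F 0 y₂ + y₁ ⬝ᵥ q)
    (hF₂ : ∀ y₁, ∃ q, ∀ y₂, F y₁ y₂ = F y₁ 0 + y₂ ⬝ᵥ q)
    {B : ℝ} {a₁ a₂ : ι → ℝ} (ha : (a₁, a₂) ∈ twoPhaseBudgetSet ι B) :
    ∃ y₁ y₂ : ι → ℝ, (y₁, y₂) ∈ twoPhaseBudgetSet ι B ∧ (support y₁).Subsingleton ∧
      (support y₂).Subsingleton ∧ (∑ i, (y₁ i + y₂ i) = B ∨ y₁ = 0 ∧ y₂ = 0) ∧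
      F y₁ y₂ ≤ F a₁ a₂ := by
  obtain ⟨ha₁, ha₂, haB⟩ := ha
  rw [sum_add_distrib] at haB
  have ha₂_nonneg : 0 ≤ ∑ i, a₂ i := sum_nonneg fun i _ => ha₂ i
  obtain ⟨u, hu, huB, hu_supp, -, hu_le⟩ :=
    exists_sparse_le_of_affine (hF₁ a₂) ha₁ (B := B - ∑ i, a₂ i) (by linarith)
  obtain ⟨v, hv, hvB, hv_supp, rfl | hv_full, hv_le⟩ :=
    exists_sparse_le_of_affine (hF₂ u) ha₂ (B := B - ∑ i, u i) (by linarith)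
  · obtain ⟨w, hw, hwB, hw_supp, hw_ext, hw_le⟩ :=
      exists_sparse_le_of_affine (hF₁ 0) hu (B := B) (by linarith)
    refine ⟨w, 0, ⟨hw, fun _ => le_rfl, by simpa using hwB⟩, hw_supp, by simp, ?_,
      hw_le.trans (hv_le.trans hu_le)⟩
    rcases hw_ext with rfl | hw_full
    · exact Or.inr ⟨rfl, rfl⟩
    · exact Or.inl (by simpa using hw_full)
  · refine ⟨u, v, ⟨hu, hv, ?_⟩, hu_supp, hv_supp, Or.inl ?_, hv_le.trans hu_le⟩ <;>
      rw [sum_add_distrib] <;> linarith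

end TwoPhaseBudget

theorem twoPhaseF_eq_add_dotProduct_left (n : ℕ) (θ c r s : Fin n → ℝ)
    (b : Matrix (Fin n) (Fin n) ℝ) (x1 x2 y1 y2 : Fin n → ℝ) :
    twoPhaseF n θ c r s b x1 x2 y1 y2 = twoPhaseF n θ c r s b x1 x2 0 y2 +
      y1 ⬝ᵥ fun i => -(θ i / 2 * (1 - c i) * (s i + ∑ j, (x2 j + y2 j) * (θ j / 2) * b j i)) := by
  simp only [twoPhaseF, dotProduct, Pi.zero_apply, zero_mul, sum_const_zero, sub_zero, mul_neg,
    sum_neg_distrib, mul_assoc]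
  ring

theorem twoPhaseF_eq_add_dotProduct_right (n : ℕ) (θ c r s : Fin n → ℝ)
    (b : Matrix (Fin n) (Fin n) ℝ) (x1 x2 y1 y2 : Fin n → ℝ) :
    twoPhaseF n θ c r s b x1 x2 y1 y2 = twoPhaseF n θ c r s b x1 x2 y1 0 +
      y2 ⬝ᵥ fun j => θ j / 2 * ((∑ i, c i * b j i) - r j) +
        ∑ i, (x1 i * (θ i / 2) * (1 + c i) - y1 i * (θ i / 2) * (1 - c i)) * (θ j / 2 * b j i) := by
  have split_y2 : ∀ G : Fin n → ℝ, ∑ i, G i * (s i + ∑ j, (x2 j + y2 j) * (θ j / 2) * b j i) =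
      ∑ i, G i * (s i + ∑ j, (x2 j + 0) * (θ j / 2) * b j i) +
        ∑ j, y2 j * ∑ i, G i * (θ j / 2 * b j i) := by
    intro G
    simp only [add_zero, add_mul, sum_add_distrib, mul_add, mul_sum]
    rw [add_assoc, sum_comm (f := fun i j => G i * (y2 j * _ * _))]
    congr 2
    exact sum_congr rfl fun j _ => sum_congr rfl fun i _ => by ring
  simp only [twoPhaseF, split_y2]
  simp only [dotProduct, Pi.zero_apply, zero_mul, sum_const_zero, add_zero, sub_zero, mul_add,
    mul_sub, sub_mul, sum_add_distrib, sum_sub_distrib, mul_sum]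
  ring_nf

theorem continuous_twoPhaseF (n : ℕ) (θ c r s : Fin n → ℝ) (b : Matrix (Fin n) (Fin n) ℝ)
    (x1 x2 : Fin n → ℝ) :
    Continuous fun p : (Fin n → ℝ) × (Fin n → ℝ) => twoPhaseF n θ c r s b x1 x2 p.1 p.2 := by
  unfold twoPhaseF
  fun_prop

theorem prop2_bad_camp_general (n : ℕ)
    (θ : Fin n → ℝ)
    (r : Fin n → ℝ)
    (c : Fin n → ℝ)
    (b : Matrix (Fin n) (Fin n) ℝ)
    (s : Fin n → ℝ)
    (x1 x2 : Fin n → ℝ)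
    (kb : ℝ) (hkb : 0 < kb) :
    ∃ y1 y2 : Fin n → ℝ,
      (∀ i, 0 ≤ y1 i) ∧ (∀ i, 0 ≤ y2 i) ∧ (∑ i, (y1 i + y2 i)) ≤ kb ∧
      (∀ y1' y2' : Fin n → ℝ,
        (∀ i, 0 ≤ y1' i) → (∀ i, 0 ≤ y2' i) → (∑ i, (y1' i + y2' i)) ≤ kb →
        twoPhaseF n θ c r s b x1 x2 y1 y2 ≤ twoPhaseF n θ c r s b x1 x2 y1' y2') ∧
      (∀ i j, y1 i ≠ 0 → y1 j ≠ 0 → i = j) ∧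
      (∀ i j, y2 i ≠ 0 → y2 j ≠ 0 → i = j) ∧
      ((∑ i, (y1 i + y2 i)) = kb ∨ (y1 = 0 ∧ y2 = 0)) := by
  obtain ⟨⟨a1, a2⟩, ha, ha_min⟩ := (isCompact_twoPhaseBudgetSet (Fin n) kb).exists_isMinOn
    ⟨0, zero_mem_twoPhaseBudgetSet (Fin n) hkb.le⟩
    (continuous_twoPhaseF n θ c r s b x1 x2).continuousOn
  obtain ⟨y1, y2, ⟨hy1, hy2, hy_kb⟩, hy1_supp, hy2_supp, hy_ext, hy_le⟩ :=
    exists_sparse_le_of_biaffine (F := twoPhaseF n θ c r s b x1 x2)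
      (fun y2 => ⟨_, fun y1 => twoPhaseF_eq_add_dotProduct_left n θ c r s b x1 x2 y1 y2⟩)
      (fun y1 => ⟨_, fun y2 => twoPhaseF_eq_add_dotProduct_right n θ c r s b x1 x2 y1 y2⟩) ha
  exact ⟨y1, y2, hy1, hy2, hy_kb,
    fun y1' y2' h1 h2 hkb' => hy_le.trans (isMinOn_iff.mp ha_min (y1', y2') ⟨h1, h2, hkb'⟩),
    fun _ _ hi hj => hy1_supp hi hj, fun _ _ hi hj => hy2_supp hi hj, hy_ext⟩

/-- Proposition 2, bad camp: for any fixed strategy `(x¹, x²)` of the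
good camp, the minimum of `(y¹,y²) ↦ F(x¹,x²,y¹,y²)` over the bad camp's feasible set
is attained at a point where each phase's investment vector has at most one nonzero
coordinate, and either the entire budget is exhausted or nothing is invested. -/
theorem prop2_bad_camp (n : ℕ) (hn : 0 < n)
    (W : Matrix (Fin n) (Fin n) ℝ)
    (hW : ∀ i, ∑ j, |W i j| < 1)
    (w0 θ z0 : Fin n → ℝ)
    (Δ : Matrix (Fin n) (Fin n) ℝ) (hΔ : Δ = (1 - W)⁻¹)
    (r : Fin n → ℝ) (hr : ∀ i, r i = ∑ j, Δ j i)
    (c : Fin n → ℝ) (hc : ∀ i, c i = w0 i * z0 i)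
    (b : Matrix (Fin n) (Fin n) ℝ) (hb : ∀ j i, b j i = r j * w0 j * Δ j i)
    (s : Fin n → ℝ) (hs : ∀ i, s i = ∑ j, b j i)
    (x1 x2 : Fin n → ℝ)
    (kb : ℝ) (hkb : 0 < kb) :
    ∃ y1 y2 : Fin n → ℝ,
      (∀ i, 0 ≤ y1 i) ∧ (∀ i, 0 ≤ y2 i) ∧ (∑ i, (y1 i + y2 i)) ≤ kb ∧
      (∀ y1' y2' : Fin n → ℝ,
        (∀ i, 0 ≤ y1' i) → (∀ i, 0 ≤ y2' i) → (∑ i, (y1' i + y2' i)) ≤ kb →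
        twoPhaseF n θ c r s b x1 x2 y1 y2 ≤ twoPhaseF n θ c r s b x1 x2 y1' y2') ∧
      (∀ i j, y1 i ≠ 0 → y1 j ≠ 0 → i = j) ∧
      (∀ i j, y2 i ≠ 0 → y2 j ≠ 0 → i = j) ∧
      ((∑ i, (y1 i + y2 i)) = kb ∨ (y1 = 0 ∧ y2 = 0)) :=
  prop2_bad_camp_general n θ r c b s x1 x2 kb hkb
end

section
/- (First-order conditions for the restricted two-camp game.) Fix nodes α, β, γ, δ and budgets k_g, k_b > 0, and define g(k₁, l₁) = F(k₁ e_α, (k_g − k₁) e_β, l₁ e_γ, (k_b − l₁) e_δ), where e_i denotes the i-th standard basis vector. Set A = θ_γ θ_δ (1 − c_γ) b_{δγ}, D = θ_α θ_β (1 + c_α) b_{βα}, B = (1/2)(θ_α θ_δ (1 + c_α) b_{δα} − θ_γ θ_β (1 − c_γ) b_{βγ}), E_g = −θ_β (Σ_i c_i b_{βi} + r_β) + θ_α (1 + c_α)( s_α + k_g (θ_β/2) b_{βα} + k_b (θ_δ/2) b_{δα} ), and E_b = −θ_δ (Σ_i c_i b_{δi} − r_δ) − θ_γ (1 − c_γ)(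 s_γ + k_g (θ_β/2) b_{βγ} + k_b (θ_δ/2) b_{δγ} ). Then for every (k₁, l₁) ∈ ℝ², the partial derivatives ∂g/∂k₁ and ∂g/∂l₁ both vanish at (k₁, l₁) if and only if D k₁ + B l₁ = E_g and B k₁ − A l₁ = E_b. -/
/-!
Restricted to one node per strategy, the objective `F` is a polynomial of degree two in the four
amounts invested, bilinear in (first phase, second phase). Substituting `x² = k_g − k₁` and
`y² = k_b − l₁` makes `g` a quadratic polynomial in `(k₁, l₁)` whose gradient is
`(E_g − D k₁ − B l₁, E_b − B k₁ + A l₁) / 2`; the first-order conditions are the vanishing of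
this affine map.
-/

theorem twoPhaseF_ite_eq (n : ℕ) (θ c r s : Fin n → ℝ) (b : Matrix (Fin n) (Fin n) ℝ)
    (α β γ δ : Fin n) (x₁ x₂ y₁ y₂ : ℝ) :
    twoPhaseF n θ c r s b (fun i => if i = α then x₁ else 0) (fun i => if i = β then x₂ else 0)
        (fun i => if i = γ then y₁ else 0) (fun i => if i = δ then y₂ else 0) =
      (∑ i, ∑ j, c i * b j i)
        + x₂ * (θ β / 2) * ((∑ i, c i * b β i) + r β)
        + y₂ * (θ δ / 2) * ((∑ i, c i * b δ i) - r δ)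
        + x₁ * (θ α / 2) * (1 + c α) * (s α + x₂ * (θ β / 2) * b β α + y₂ * (θ δ / 2) * b δ α)
        - y₁ * (θ γ / 2) * (1 - c γ) * (s γ + x₂ * (θ β / 2) * b β γ + y₂ * (θ δ / 2) * b δ γ) := by
  simp only [twoPhaseF, add_mul, ite_mul, zero_mul, Finset.sum_add_distrib, Finset.sum_ite_eq',
    Finset.mem_univ, if_true]
  ring

theorem hasDerivAt_quadratic (a p u x : ℝ) :
    HasDerivAt (fun t => a + p * t + u * t ^ 2) (p + 2 * u * x) x := by
  have h := (((hasDerivAt_id' x).const_mul p).const_add a).add ((hasDerivAt_pow 2 x).const_mul u)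
  exact h.congr_deriv (by norm_num; ring)

theorem deriv_eq_zero_and_deriv_eq_zero_iff_of_quadratic (q : ℝ → ℝ → ℝ) (p₁ p₂ u v w : ℝ)
    (hq : ∀ x y, q x y = q 0 0 + p₁ * x + p₂ * y + u * x ^ 2 + v * y ^ 2 + w * (x * y))
    (x y : ℝ) :
    (deriv (fun t => q t y) x = 0 ∧ deriv (fun t => q x t) y = 0) ↔
      (p₁ + 2 * u * x + w * y = 0 ∧ p₂ + 2 * v * y + w * x = 0) := by
  have hx : (fun t => q t y) =
      fun t => (q 0 0 + p₂ * y + v * y ^ 2) + (p₁ + w * y) * t + u * t ^ 2 := by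
    funext t
    rw [hq]
    ring
  have hy : (fun t => q x t) =
      fun t => (q 0 0 + p₁ * x + u * x ^ 2) + (p₂ + w * x) * t + v * t ^ 2 := by
    funext t
    rw [hq]
    ring
  rw [hx, hy, (hasDerivAt_quadratic _ _ _ x).deriv, (hasDerivAt_quadratic _ _ _ y).deriv]
  constructor <;> rintro ⟨h₁, h₂⟩ <;> constructor <;> linarith

theorem first_order_conditions_two_camp_game_general (n : ℕ)
    (θ : Fin n → ℝ) (r : Fin n → ℝ) (c : Fin n → ℝ) (b : Matrix (Fin n) (Fin n) ℝ) (s : Fin n → ℝ)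
    (α β γ δ : Fin n) (kg kb : ℝ)
    (g : ℝ → ℝ → ℝ)
    (hg : ∀ k₁ l₁ : ℝ, g k₁ l₁ =
      twoPhaseF n θ c r s b
        (fun i => if i = α then k₁ else 0)
        (fun i => if i = β then kg - k₁ else 0)
        (fun i => if i = γ then l₁ else 0)
        (fun i => if i = δ then kb - l₁ else 0))
    (A B D Eg Eb : ℝ)
    (hA : A = θ γ * θ δ * (1 - c γ) * b δ γ)
    (hD : D = θ α * θ β * (1 + c α) * b β α)
    (hB : B = (θ α * θ δ * (1 + c α) * b δ α - θ γ * θ β * (1 - c γ) * b β γ) / 2)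
    (hEg : Eg = -(θ β) * ((∑ i, c i * b β i) + r β)
      + θ α * (1 + c α) * (s α + kg * (θ β / 2) * b β α + kb * (θ δ / 2) * b δ α))
    (hEb : Eb = -(θ δ) * ((∑ i, c i * b δ i) - r δ)
      - θ γ * (1 - c γ) * (s γ + kg * (θ β / 2) * b β γ + kb * (θ δ / 2) * b δ γ)) :
    ∀ k₁ l₁ : ℝ,
      (deriv (fun t => g t l₁) k₁ = 0 ∧ deriv (fun t => g k₁ t) l₁ = 0) ↔
      (D * k₁ + B * l₁ = Eg ∧ B * k₁ - A * l₁ = Eb) := by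
  have hquad : ∀ k₁ l₁, g k₁ l₁ = g 0 0 + Eg / 2 * k₁ + Eb / 2 * l₁ + -(D / 4) * k₁ ^ 2
      + A / 4 * l₁ ^ 2 + -(B / 2) * (k₁ * l₁) := by
    intro k₁ l₁
    simp only [hg, twoPhaseF_ite_eq, hA, hB, hD, hEg, hEb]
    ring
  intro k₁ l₁
  rw [deriv_eq_zero_and_deriv_eq_zero_iff_of_quadratic g _ _ _ _ _ hquad]
  constructor <;> rintro ⟨h₁, h₂⟩ <;> constructor <;> linarith

/-- first-order conditions for the restricted two-camp game
`g(k₁,l₁) = F(k₁ e_α, (k_g−k₁) e_β, l₁ e_γ, (k_b−l₁) e_δ)`: both partial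
derivatives vanish at `(k₁,l₁)` iff `D k₁ + B l₁ = E_g` and `B k₁ − A l₁ = E_b`. -/
theorem first_order_conditions_two_camp_game (n : ℕ) (hn : 0 < n)
    (W : Matrix (Fin n) (Fin n) ℝ)
    (hW : ∀ i, ∑ j, |W i j| < 1)
    (w0 θ z0 : Fin n → ℝ)
    (Δ : Matrix (Fin n) (Fin n) ℝ) (hΔ : Δ = (1 - W)⁻¹)
    (r : Fin n → ℝ) (hr : ∀ i, r i = ∑ j, Δ j i)
    (c : Fin n → ℝ) (hc : ∀ i, c i = w0 i * z0 i)
    (b : Matrix (Fin n) (Fin n) ℝ) (hb : ∀ j i, b j i = r j * w0 j * Δ j i)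
    (s : Fin n → ℝ) (hs : ∀ i, s i = ∑ j, b j i)
    (α β γ δ : Fin n) (kg kb : ℝ) (hkg : 0 < kg) (hkb : 0 < kb)
    (g : ℝ → ℝ → ℝ)
    (hg : ∀ k₁ l₁ : ℝ, g k₁ l₁ =
      twoPhaseF n θ c r s b
        (fun i => if i = α then k₁ else 0)
        (fun i => if i = β then kg - k₁ else 0)
        (fun i => if i = γ then l₁ else 0)
        (fun i => if i = δ then kb - l₁ else 0))
    (A B D Eg Eb : ℝ)
    (hA : A = θ γ * θ δ * (1 - c γ) * b δ γ)
    (hD : D = θ α * θ β * (1 + c α) * b β α)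
    (hB : B = (θ α * θ δ * (1 + c α) * b δ α - θ γ * θ β * (1 - c γ) * b β γ) / 2)
    (hEg : Eg = -(θ β) * ((∑ i, c i * b β i) + r β)
      + θ α * (1 + c α) * (s α + kg * (θ β / 2) * b β α + kb * (θ δ / 2) * b δ α))
    (hEb : Eb = -(θ δ) * ((∑ i, c i * b δ i) - r δ)
      - θ γ * (1 - c γ) * (s γ + kg * (θ β / 2) * b β γ + kb * (θ δ / 2) * b δ γ)) :
    ∀ k₁ l₁ : ℝ,
      (deriv (fun t => g t l₁) k₁ = 0 ∧ deriv (fun t => g k₁ t) l₁ = 0) ↔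
      (D * k₁ + B * l₁ = Eg ∧ B * k₁ - A * l₁ = Eb) :=
  first_order_conditions_two_camp_game_general n θ r c b s α β γ δ kg kb g hg A B D Eg Eb hA hD hB
    hEg hEb
end

section
/- (Existence of a saddle point of the restricted two-camp game.) Suppose W_{ij} ≥ 0 for all i, j, and for all i: 0 ≤ w⁰_i ≤ 1, θ_i ≥ 0, and z⁰_i ∈ [−1, 1]. Fix nodes α, β, γ, δ and budgets k_g, k_b > 0, and define g(k₁, l₁) = F(k₁ e_α, (k_g − k₁) e_β, l₁ e_γ, (k_b − l₁) e_δ). Then there exists a saddle point (k₁*, l₁*) ∈ [0, k_g] × [0, k_b], i.e., a point such that g(k₁, l₁*) ≤ g(k₁*, l₁*) ≤ g(k₁*, l₁) for all k₁ ∈ [0, k_g] and all l₁ ∈ [0, k_b]. -/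
/-!
With `k` and `l` on single nodes, `g(k, l)` is a quadratic `a₀ + a₁ k + a₂ l + A k² + B l² + C k l`.
Because `(1 - W)⁻¹ = ∑ Wᵐ` has nonnegative entries, so does `b`, and `|c| ≤ 1`; this gives
`A ≤ 0 ≤ B`, so `g` is concave in `k` and convex in `l`. For `A < 0 < B` the best responses are
continuous (clamped vertices of parabolas), and a fixed point of their composition on `[0, k_b]`,
which exists by the intermediate value theorem, is a saddle point. The degenerate case follows
by perturbing `A` and `B` and passing to the limit, using compactness of the rectangle.
-/

open Set Function

section NeumannSeries
variable {ι : Type*} [Fintype ι] [DecidableEq ι]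
attribute [local instance] Matrix.linftyOpNormedRing Matrix.linftyOpNormedAlgebra

theorem Matrix.linfty_opNorm_lt_one {W : Matrix ι ι ℝ} (hW : ∀ i, ∑ j, |W i j| < 1) :
    ‖W‖ < 1 := by
  rw [Matrix.linfty_opNorm_def, ← NNReal.coe_one, NNReal.coe_lt_coe,
    Finset.sup_lt_iff zero_lt_one]
  intro i _
  rw [← NNReal.coe_lt_coe]
  simpa [Real.norm_eq_abs] using hW i

theorem Matrix.inv_one_sub_apply_nonneg {W : Matrix ι ι ℝ} (hW : ∀ i, ∑ j, |W i j| < 1)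
    (hW₀ : ∀ i j, 0 ≤ W i j) (i j : ι) : 0 ≤ (1 - W)⁻¹ i j := by
  have hsum := hasSum_geom_series_inverse W (Matrix.linfty_opNorm_lt_one hW)
  rw [Matrix.nonsing_inv_eq_ringInverse]
  -- the `L∞` operator norm induces the entrywise topology, so the sum passes to entries
  exact (Pi.hasSum.mp (Pi.hasSum.mp hsum i) j).nonneg fun m => Matrix.pow_apply_nonneg hW₀ m i j

end NeumannSeries

section Saddle
variable {α β : Type*}

def IsApproxSaddlePoint (f : α → β → ℝ) (K : Set α) (L : Set β) (ε : ℝ) (x : α) (y : β) :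
    Prop :=
  (∀ x' ∈ K, f x' y ≤ f x y + ε) ∧ ∀ y' ∈ L, f x y ≤ f x y' + ε

variable [TopologicalSpace α] [TopologicalSpace β] {f : α → β → ℝ} {K : Set α} {L : Set β}

theorem isClosed_setOf_isApproxSaddlePoint (hf : Continuous (uncurry f)) (ε : ℝ) :
    IsClosed {p : α × β | IsApproxSaddlePoint f K L ε p.1 p.2} := by
  have hf' : ∀ {u : α × β → α} {v : α × β → β},
      Continuous u → Continuous v → Continuous fun p => f (u p) (v p) :=
    fun hu hv => hf.comp (hu.prodMk hv)
  simp only [IsApproxSaddlePoint, ofPred_and, ofPred_forall]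
  exact (isClosed_biInter fun x' _ => isClosed_le (hf' continuous_const continuous_snd)
      ((hf' continuous_fst continuous_snd).add continuous_const)).inter
    (isClosed_biInter fun y' _ => isClosed_le (hf' continuous_fst continuous_snd)
      ((hf' continuous_fst continuous_const).add continuous_const))

theorem exists_isApproxSaddlePoint_zero_of_forall_pos (hf : Continuous (uncurry f))
    (hK : IsCompact K) (hL : IsCompact L)
    (h : ∀ ε > 0, ∃ x ∈ K, ∃ y ∈ L, IsApproxSaddlePoint f K L ε x y) :
    ∃ x ∈ K, ∃ y ∈ L, IsApproxSaddlePoint f K L 0 x y := by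
  let S : Ioi (0 : ℝ) → Set (α × β) := fun ε => {p | IsApproxSaddlePoint f K L ε p.1 p.2}
  have hS_mono : Monotone S := fun ε ε' hεε' p hp =>
    ⟨fun x' hx' => (hp.1 x' hx').trans (by gcongr),
      fun y' hy' => (hp.2 y' hy').trans (by gcongr)⟩
  obtain ⟨⟨x, y⟩, ⟨hx, hy⟩, hxy⟩ : ((K ×ˢ L) ∩ ⋂ ε, S ε).Nonempty := by
    by_contra hempty
    obtain ⟨ε, hε⟩ := (hK.prod hL).elim_directed_family_closed S
      (fun ε => isClosed_setOf_isApproxSaddlePoint hf ε) (not_nonempty_iff_eq_empty.mp hempty)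
      hS_mono.directed_ge
    obtain ⟨x, hx, y, hy, hxy⟩ := h ε ε.2
    exact (eq_empty_iff_forall_notMem.mp hε) (x, y) ⟨⟨hx, hy⟩, hxy⟩
  have hxy' : ∀ ε > 0, IsApproxSaddlePoint f K L ε x y := fun ε hε => mem_iInter.mp hxy ⟨ε, hε⟩
  refine ⟨x, hx, y, hy, fun x' hx' => ?_, fun y' hy' => ?_⟩ <;> rw [add_zero]
  · exact le_of_forall_pos_le_add fun ε hε => (hxy' ε hε).1 x' hx'
  · exact le_of_forall_pos_le_add fun ε hε => (hxy' ε hε).2 y' hy'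

end Saddle

theorem exists_isApproxSaddlePoint_zero_of_bestResponse {α : Type*} [TopologicalSpace α]
    {K : Set α} {c d : ℝ} (hcd : c ≤ d) {f : α → ℝ → ℝ} {φ : ℝ → α} {ψ : α → ℝ}
    (hφ : Continuous φ) (hψ : Continuous ψ) (hφ_mem : ∀ y, φ y ∈ K) (hψ_mem : ∀ x, ψ x ∈ Icc c d)
    (hφ_max : ∀ y, ∀ x ∈ K, f x y ≤ f (φ y) y)
    (hψ_min : ∀ x, ∀ y ∈ Icc c d, f x (ψ x) ≤ f x y) :
    ∃ x ∈ K, ∃ y ∈ Icc c d, IsApproxSaddlePoint f K (Icc c d) 0 x y := by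
  obtain ⟨y, hy, hfix⟩ := exists_mem_Icc_isFixedPt_of_mapsTo (f := ψ ∘ φ)
    (hψ.comp hφ).continuousOn hcd fun y _ => hψ_mem (φ y)
  refine ⟨φ y, hφ_mem y, y, hy, fun x hx => ?_, fun y' hy' => ?_⟩ <;> rw [add_zero]
  · exact hφ_max y x hx
  · have := hψ_min (φ y) y' hy'
    rwa [show ψ (φ y) = y from hfix] at this

theorem Set.abs_projIcc_sub_le {a b : ℝ} (h : a ≤ b) (v : ℝ) {x : ℝ} (hx : x ∈ Icc a b) :
    |(projIcc a b h v : ℝ) - v| ≤ |x - v| := by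
  rcases le_total v a with hva | hav
  · rw [projIcc_of_le_left h hva, abs_of_nonneg (by simpa), abs_of_nonneg (by linarith [hx.1])]
    simpa using hx.1
  rcases le_total b v with hbv | hvb
  · rw [projIcc_of_right_le h hbv, abs_of_nonpos (by simpa), abs_of_nonpos (by linarith [hx.2])]
    linarith [hx.2]
  · rw [projIcc_of_mem h ⟨hav, hvb⟩, sub_self, abs_zero]
    exact abs_nonneg _

theorem mul_sq_sub_mul_projIcc_le {a b : ℝ} (h : a ≤ b) {p : ℝ} (hp : 0 < p) (t : ℝ) {x : ℝ}
    (hx : x ∈ Icc a b) :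
    p * (projIcc a b h (t / (2 * p)) : ℝ) ^ 2 - t * projIcc a b h (t / (2 * p)) ≤
      p * x ^ 2 - t * x := by
  set v := t / (2 * p)
  set z : ℝ := (projIcc a b h v : ℝ)
  have ht : t = 2 * p * v := by simp only [v]; field_simp
  have hzx : (z - v) ^ 2 ≤ (x - v) ^ 2 := sq_le_sq.mpr (abs_projIcc_sub_le h v hx)
  rw [ht]
  linear_combination mul_le_mul_of_nonneg_left hzx hp.le

def quadPayoff (a₀ a₁ a₂ A B C x y : ℝ) : ℝ :=
  a₀ + a₁ * x + a₂ * y + A * x ^ 2 + B * y ^ 2 + C * (x * y)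

section QuadPayoff
variable {a₀ a₁ a₂ A B C a b c d : ℝ}

theorem continuous_quadPayoff : Continuous (uncurry (quadPayoff a₀ a₁ a₂ A B C)) := by
  unfold quadPayoff uncurry
  fun_prop

theorem exists_isApproxSaddlePoint_zero_quadPayoff_of_neg_of_pos (hA : A < 0) (hB : 0 < B)
    (hab : a ≤ b) (hcd : c ≤ d) :
    ∃ x ∈ Icc a b, ∃ y ∈ Icc c d,
      IsApproxSaddlePoint (quadPayoff a₀ a₁ a₂ A B C) (Icc a b) (Icc c d) 0 x y := by
  refine exists_isApproxSaddlePoint_zero_of_bestResponse hcd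
    (φ := fun y => projIcc a b hab ((a₁ + C * y) / (2 * -A)))
    (ψ := fun x => projIcc c d hcd (-(a₂ + C * x) / (2 * B)))
    (by fun_prop) (by fun_prop) (fun _ => Subtype.prop _) (fun _ => Subtype.prop _)
    (fun y x hx => ?_) (fun x y hy => ?_)
  · have := mul_sq_sub_mul_projIcc_le hab (neg_pos.mpr hA) (a₁ + C * y) hx
    unfold quadPayoff
    linear_combination this
  · have := mul_sq_sub_mul_projIcc_le hcd hB (-(a₂ + C * x)) hy
    unfold quadPayoff
    linear_combination this

/-- The payoffs with `A - η < 0 < B + η` and with `A, B` differ by `η (y² - x²)`, so a saddle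
point of the former is an `ε`-saddle point of the latter for `η = ε / (a² + b² + c² + d² + 1)`. -/
theorem exists_isApproxSaddlePoint_quadPayoff (hA : A ≤ 0) (hB : 0 ≤ B) (hab : a ≤ b)
    (hcd : c ≤ d) {ε : ℝ} (hε : 0 < ε) :
    ∃ x ∈ Icc a b, ∃ y ∈ Icc c d,
      IsApproxSaddlePoint (quadPayoff a₀ a₁ a₂ A B C) (Icc a b) (Icc c d) ε x y := by
  set M := a ^ 2 + b ^ 2 + c ^ 2 + d ^ 2 + 1
  have hM : 0 < M := by positivity
  have hsq_le {u v w : ℝ} (hw : w ∈ Icc u v) : w ^ 2 ≤ u ^ 2 + v ^ 2 := by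
    rcases le_total 0 w with h | h <;> nlinarith [hw.1, hw.2]
  set η := ε / M
  have hη : 0 < η := by positivity
  obtain ⟨x, hx, y, hy, hmax, hmin⟩ :=
    exists_isApproxSaddlePoint_zero_quadPayoff_of_neg_of_pos (a₀ := a₀) (a₁ := a₁) (a₂ := a₂)
      (C := C) (by linarith : A - η < 0) (by linarith : 0 < B + η) hab hcd
  have hηM : η * M = ε := div_mul_cancel₀ ε hM.ne'
  refine ⟨x, hx, y, hy, fun x' hx' => ?_, fun y' hy' => ?_⟩
  · have hx'M : η * x' ^ 2 ≤ ε := hηM ▸ by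
      gcongr; linarith [hsq_le hx', sq_nonneg c, sq_nonneg d]
    have := hmax x' hx'
    unfold quadPayoff at *
    linarith [mul_nonneg hη.le (sq_nonneg x)]
  · have hy'M : η * y' ^ 2 ≤ ε := hηM ▸ by
      gcongr; linarith [hsq_le hy', sq_nonneg a, sq_nonneg b]
    have := hmin y' hy'
    unfold quadPayoff at *
    linarith [mul_nonneg hη.le (sq_nonneg y)]

theorem exists_isApproxSaddlePoint_zero_quadPayoff (hA : A ≤ 0) (hB : 0 ≤ B) (hab : a ≤ b)
    (hcd : c ≤ d) :
    ∃ x ∈ Icc a b, ∃ y ∈ Icc c d,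
      IsApproxSaddlePoint (quadPayoff a₀ a₁ a₂ A B C) (Icc a b) (Icc c d) 0 x y :=
  exists_isApproxSaddlePoint_zero_of_forall_pos continuous_quadPayoff isCompact_Icc isCompact_Icc
    fun _ hε => exists_isApproxSaddlePoint_quadPayoff hA hB hab hcd hε

end QuadPayoff

theorem twoPhaseF_restrict_eq_quadPayoff (n : ℕ) (θ c r s : Fin n → ℝ)
    (b : Matrix (Fin n) (Fin n) ℝ) (α β γ δ : Fin n) (kg kb : ℝ) :
    ∃ a₀ a₁ a₂ C : ℝ, ∀ k l : ℝ,
      twoPhaseF n θ c r s b (fun i => if i = α then k else 0)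
        (fun i => if i = β then kg - k else 0) (fun i => if i = γ then l else 0)
        (fun i => if i = δ then kb - l else 0) =
      quadPayoff a₀ a₁ a₂ (-(θ α / 2 * (1 + c α) * (θ β / 2 * b β α)))
        (θ γ / 2 * (1 - c γ) * (θ δ / 2 * b δ γ)) C k l := by
  set P := θ α / 2 * (1 + c α)
  set Q := θ γ / 2 * (1 - c γ)
  refine ⟨(∑ i, ∑ j, c i * b j i) + kg * (θ β / 2) * ((∑ i, c i * b β i) + r β)
      + kb * (θ δ / 2) * ((∑ i, c i * b δ i) - r δ),
    P * (s α + θ β / 2 * b β α * kg + θ δ / 2 * b δ α * kb)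
      - θ β / 2 * ((∑ i, c i * b β i) + r β),
    -(Q * (s γ + θ β / 2 * b β γ * kg + θ δ / 2 * b δ γ * kb))
      - θ δ / 2 * ((∑ i, c i * b δ i) - r δ),
    Q * (θ β / 2 * b β γ) - P * (θ δ / 2 * b δ α), fun k l => ?_⟩
  simp only [twoPhaseF, quadPayoff, add_mul, ite_mul, zero_mul, Finset.sum_add_distrib,
    Finset.sum_ite_eq', Finset.mem_univ, if_true]
  ring

theorem saddle_point_two_camp_game_general (n : ℕ)
    (W : Matrix (Fin n) (Fin n) ℝ)
    (hW : ∀ i, ∑ j, |W i j| < 1)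
    (hWnonneg : ∀ i j, 0 ≤ W i j)
    (w0 θ z0 : Fin n → ℝ)
    (hw0 : ∀ i, 0 ≤ w0 i ∧ w0 i ≤ 1)
    (hθ : ∀ i, 0 ≤ θ i)
    (hz0 : ∀ i, -1 ≤ z0 i ∧ z0 i ≤ 1)
    (Δ : Matrix (Fin n) (Fin n) ℝ) (hΔ : Δ = (1 - W)⁻¹)
    (r : Fin n → ℝ) (hr : ∀ i, r i = ∑ j, Δ j i)
    (c : Fin n → ℝ) (hc : ∀ i, c i = w0 i * z0 i)
    (b : Matrix (Fin n) (Fin n) ℝ) (hb : ∀ j i, b j i = r j * w0 j * Δ j i)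
    (s : Fin n → ℝ)
    (α β γ δ : Fin n) (kg kb : ℝ) (hkg : 0 < kg) (hkb : 0 < kb)
    (g : ℝ → ℝ → ℝ)
    (hg : ∀ k₁ l₁ : ℝ, g k₁ l₁ =
      twoPhaseF n θ c r s b
        (fun i => if i = α then k₁ else 0)
        (fun i => if i = β then kg - k₁ else 0)
        (fun i => if i = γ then l₁ else 0)
        (fun i => if i = δ then kb - l₁ else 0)) :
    ∃ k₁star ∈ Set.Icc (0 : ℝ) kg, ∃ l₁star ∈ Set.Icc (0 : ℝ) kb,
      (∀ k₁ ∈ Set.Icc (0 : ℝ) kg, g k₁ l₁star ≤ g k₁star l₁star) ∧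
      (∀ l₁ ∈ Set.Icc (0 : ℝ) kb, g k₁star l₁star ≤ g k₁star l₁) := by
  have hΔ₀ : ∀ i j, 0 ≤ Δ i j := hΔ ▸ Matrix.inv_one_sub_apply_nonneg hW hWnonneg
  have hb₀ (j i : Fin n) : 0 ≤ b j i := by
    rw [hb, hr]
    exact mul_nonneg (mul_nonneg (Finset.sum_nonneg fun k _ => hΔ₀ k j) (hw0 j).1) (hΔ₀ j i)
  have hc₁ (i : Fin n) : |c i| ≤ 1 := by
    rw [hc, abs_mul]
    exact mul_le_one₀ (abs_le.mpr ⟨by linarith [hw0 i], (hw0 i).2⟩) (abs_nonneg _)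
      (abs_le.mpr (hz0 i))
  have hθ₂ (i : Fin n) : 0 ≤ θ i / 2 := div_nonneg (hθ i) zero_le_two
  have hA : -(θ α / 2 * (1 + c α) * (θ β / 2 * b β α)) ≤ 0 := neg_nonpos.mpr <|
    mul_nonneg (mul_nonneg (hθ₂ α) (by linarith [neg_abs_le (c α), hc₁ α]))
      (mul_nonneg (hθ₂ β) (hb₀ β α))
  have hB : 0 ≤ θ γ / 2 * (1 - c γ) * (θ δ / 2 * b δ γ) :=
    mul_nonneg (mul_nonneg (hθ₂ γ) (by linarith [le_abs_self (c γ), hc₁ γ]))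
      (mul_nonneg (hθ₂ δ) (hb₀ δ γ))
  obtain ⟨a₀, a₁, a₂, C, hq⟩ := twoPhaseF_restrict_eq_quadPayoff n θ c r s b α β γ δ kg kb
  obtain ⟨k, hk, l, hl, hmax, hmin⟩ :=
    exists_isApproxSaddlePoint_zero_quadPayoff (a₀ := a₀) (a₁ := a₁) (a₂ := a₂) (C := C)
      hA hB hkg.le hkb.le
  refine ⟨k, hk, l, hl, fun k' hk' => ?_, fun l' hl' => ?_⟩ <;> simp only [hg, hq]
  · simpa using hmax k' hk'
  · simpa using hmin l' hl'

/-- under the paper's sign assumptions, the restricted two-camp game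
`g(k₁,l₁)` has a saddle point on `[0,k_g] × [0,k_b]`. -/
theorem saddle_point_two_camp_game (n : ℕ) (hn : 0 < n)
    (W : Matrix (Fin n) (Fin n) ℝ)
    (hW : ∀ i, ∑ j, |W i j| < 1)
    (hWnonneg : ∀ i j, 0 ≤ W i j)
    (w0 θ z0 : Fin n → ℝ)
    (hw0 : ∀ i, 0 ≤ w0 i ∧ w0 i ≤ 1)
    (hθ : ∀ i, 0 ≤ θ i)
    (hz0 : ∀ i, -1 ≤ z0 i ∧ z0 i ≤ 1)
    (Δ : Matrix (Fin n) (Fin n) ℝ) (hΔ : Δ = (1 - W)⁻¹)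
    (r : Fin n → ℝ) (hr : ∀ i, r i = ∑ j, Δ j i)
    (c : Fin n → ℝ) (hc : ∀ i, c i = w0 i * z0 i)
    (b : Matrix (Fin n) (Fin n) ℝ) (hb : ∀ j i, b j i = r j * w0 j * Δ j i)
    (s : Fin n → ℝ) (hs : ∀ i, s i = ∑ j, b j i)
    (α β γ δ : Fin n) (kg kb : ℝ) (hkg : 0 < kg) (hkb : 0 < kb)
    (g : ℝ → ℝ → ℝ)
    (hg : ∀ k₁ l₁ : ℝ, g k₁ l₁ =
      twoPhaseF n θ c r s b
        (fun i => if i = α then k₁ else 0)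
        (fun i => if i = β then kg - k₁ else 0)
        (fun i => if i = γ then l₁ else 0)
        (fun i => if i = δ then kb - l₁ else 0)) :
    ∃ k₁star ∈ Set.Icc (0 : ℝ) kg, ∃ l₁star ∈ Set.Icc (0 : ℝ) kb,
      (∀ k₁ ∈ Set.Icc (0 : ℝ) kg, g k₁ l₁star ≤ g k₁star l₁star) ∧
      (∀ l₁ ∈ Set.Icc (0 : ℝ) kb, g k₁star l₁star ≤ g k₁star l₁) :=
  saddle_point_two_camp_game_general n W hW hWnonneg w0 θ z0 hw0 hθ hz0 Δ hΔ r hr c hc b hb s α β γ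
    δ kg kb hkg hkb g hg
end

section
/- (Antisymmetry of the game when the network is initially unbiased.) If z⁰ = 0 (equivalently, c_i = 0 for all i), then for all x¹, x², y¹, y² ∈ ℝⁿ, F(x¹, x², y¹, y²) = −F(y¹, y², x¹, x²). In particular, F(x¹, x², x¹, x²) = 0 for all x¹, x². -/
/-!
With no initial bias (`c = 0`) the objective collapses to
`∑ⱼ (x²ⱼ - y²ⱼ) θⱼ/2 rⱼ + ∑ᵢ (x¹ᵢ - y¹ᵢ) θᵢ/2 (sᵢ + ∑ⱼ (x²ⱼ + y²ⱼ) θⱼ/2 bⱼᵢ)`.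
Swapping the camps negates each difference `x - y` and fixes the sum `x² + y²`, so `F` changes
sign.
-/

open Finset

section ZeroBias

variable {n : ℕ} (θ r s : Fin n → ℝ) (b : Matrix (Fin n) (Fin n) ℝ) (x1 x2 y1 y2 : Fin n → ℝ)

theorem twoPhaseF_zero_bias :
    twoPhaseF n θ 0 r s b x1 x2 y1 y2 =
      ∑ j, (x2 j - y2 j) * (θ j / 2) * r j
      + ∑ i, (x1 i - y1 i) * (θ i / 2) * (s i + ∑ j, (x2 j + y2 j) * (θ j / 2) * b j i) := by
  simp only [twoPhaseF, Pi.zero_apply, zero_mul, sum_const_zero, zero_add, zero_sub, add_zero,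
    sub_zero, mul_one, mul_neg, sub_mul, sum_sub_distrib, sum_neg_distrib]
  ring

theorem twoPhaseF_zero_bias_swap :
    twoPhaseF n θ 0 r s b x1 x2 y1 y2 = -twoPhaseF n θ 0 r s b y1 y2 x1 x2 := by
  simp only [twoPhaseF_zero_bias, add_comm (y2 _) (x2 _), ← neg_sub (x1 _), ← neg_sub (x2 _),
    neg_mul, sum_neg_distrib, neg_add, neg_neg]

end ZeroBias

theorem antisymmetry_unbiased_network_general (n : ℕ)
    (w0 θ z0 : Fin n → ℝ)
    (hz0 : z0 = 0)
    (r : Fin n → ℝ)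
    (c : Fin n → ℝ) (hc : ∀ i, c i = w0 i * z0 i)
    (b : Matrix (Fin n) (Fin n) ℝ)
    (s : Fin n → ℝ) :
    (∀ x1 x2 y1 y2 : Fin n → ℝ,
      twoPhaseF n θ c r s b x1 x2 y1 y2 = -(twoPhaseF n θ c r s b y1 y2 x1 x2)) ∧
    (∀ x1 x2 : Fin n → ℝ, twoPhaseF n θ c r s b x1 x2 x1 x2 = 0) := by
  obtain rfl : c = 0 := funext fun i => by simp [hc, hz0]
  exact ⟨twoPhaseF_zero_bias_swap θ r s b,
    fun x1 x2 => self_eq_neg.mp (twoPhaseF_zero_bias_swap θ r s b x1 x2 x1 x2)⟩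

/-- if the network is initially unbiased (`z⁰ = 0`), then `F` is
antisymmetric under interchanging the two camps' strategies; in particular the
game value on the diagonal is zero. -/
theorem antisymmetry_unbiased_network (n : ℕ) (hn : 0 < n)
    (W : Matrix (Fin n) (Fin n) ℝ)
    (hW : ∀ i, ∑ j, |W i j| < 1)
    (w0 θ z0 : Fin n → ℝ)
    (hz0 : z0 = 0)
    (Δ : Matrix (Fin n) (Fin n) ℝ) (hΔ : Δ = (1 - W)⁻¹)
    (r : Fin n → ℝ) (hr : ∀ i, r i = ∑ j, Δ j i)
    (c : Fin n → ℝ) (hc : ∀ i, c i = w0 i * z0 i)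
    (b : Matrix (Fin n) (Fin n) ℝ) (hb : ∀ j i, b j i = r j * w0 j * Δ j i)
    (s : Fin n → ℝ) (hs : ∀ i, s i = ∑ j, b j i) :
    (∀ x1 x2 y1 y2 : Fin n → ℝ,
      twoPhaseF n θ c r s b x1 x2 y1 y2 = -(twoPhaseF n θ c r s b y1 y2 x1 x2)) ∧
    (∀ x1 x2 : Fin n → ℝ, twoPhaseF n θ c r s b x1 x2 x1 x2 = 0) :=
  antisymmetry_unbiased_network_general n w0 θ z0 hz0 r c hc b s
end

section
/- (Zero value of the symmetric game.) Suppose z⁰ = 0 (equivalently, c_i = 0 for all i) and the two camps have equal budgets k_g = k_b = k > 0. Let K = {(u¹, u²) ∈ ℝⁿ × ℝⁿ : u¹_i ≥ 0 and u²_i ≥ 0 for all i, and Σ_i (u¹_i + u²_i) ≤ k} be the common feasible set. Then sup_{(x¹,x²) ∈ K} inf_{(y¹,y²) ∈ K} F(x¹, x², y¹, y²) ≤ 0 ≤ inf_{(y¹,y²) ∈ K} sup_{(x¹,x²) ∈ K} F(x¹, x², y¹, y²). -/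
/-- When `c = 0` the objective is antisymmetric under swapping the two players. -/
lemma twoPhaseF_antisymm (n : ℕ) (θ r s : Fin n → ℝ) (b : Matrix (Fin n) (Fin n) ℝ)
    (x1 x2 y1 y2 : Fin n → ℝ) :
    twoPhaseF n θ 0 r s b x1 x2 y1 y2 + twoPhaseF n θ 0 r s b y1 y2 x1 x2 = 0 := by
  simp only [twoPhaseF, Pi.zero_apply, zero_mul, Finset.sum_const_zero, zero_add, add_zero,
    mul_one, sub_zero, mul_zero, zero_sub]
  have h : ∀ i : Fin n, (∑ j, (y2 j + x2 j) * (θ j / 2) * b j i)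
      = ∑ j, (x2 j + y2 j) * (θ j / 2) * b j i := by
    intro i; apply Finset.sum_congr rfl; intro j _; ring
  simp only [h, sub_eq_add_neg, ← Finset.sum_neg_distrib, ← Finset.sum_add_distrib]
  apply Finset.sum_eq_zero; intro i _; ring

lemma twoPhaseF_diag (n : ℕ) (θ r s : Fin n → ℝ) (b : Matrix (Fin n) (Fin n) ℝ)
    (x1 x2 : Fin n → ℝ) :
    twoPhaseF n θ 0 r s b x1 x2 x1 x2 = 0 := by
  have := twoPhaseF_antisymm n θ r s b x1 x2 x1 x2
  linarith

/-- zero value of the symmetric game: if `z⁰ = 0` and the two camps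
have the same budget `k > 0` (hence the same feasible set `K`), then
`sup_{x ∈ K} inf_{y ∈ K} F ≤ 0 ≤ inf_{y ∈ K} sup_{x ∈ K} F`. -/
theorem zero_value_symmetric_game (n : ℕ) (hn : 0 < n)
    (W : Matrix (Fin n) (Fin n) ℝ)
    (hW : ∀ i, ∑ j, |W i j| < 1)
    (w0 θ z0 : Fin n → ℝ)
    (hz0 : z0 = 0)
    (Δ : Matrix (Fin n) (Fin n) ℝ) (hΔ : Δ = (1 - W)⁻¹)
    (r : Fin n → ℝ) (hr : ∀ i, r i = ∑ j, Δ j i)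
    (c : Fin n → ℝ) (hc : ∀ i, c i = w0 i * z0 i)
    (b : Matrix (Fin n) (Fin n) ℝ) (hb : ∀ j i, b j i = r j * w0 j * Δ j i)
    (s : Fin n → ℝ) (hs : ∀ i, s i = ∑ j, b j i)
    (k : ℝ) (hk : 0 < k)
    (K : Set ((Fin n → ℝ) × (Fin n → ℝ)))
    (hK : K = {u : (Fin n → ℝ) × (Fin n → ℝ) |
      (∀ i, 0 ≤ u.1 i) ∧ (∀ i, 0 ≤ u.2 i) ∧ (∑ i, (u.1 i + u.2 i)) ≤ k}) :
    (sSup ((fun p => sInf ((fun q => twoPhaseF n θ c r s b p.1 p.2 q.1 q.2) '' K)) '' K)) ≤ 0 ∧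
    0 ≤ sInf ((fun q => sSup ((fun p => twoPhaseF n θ c r s b p.1 p.2 q.1 q.2) '' K)) '' K) := by
  have hc0 : c = 0 := by
    funext i; rw [hc, hz0]; simp
  subst hc0
  have hdiag : ∀ p : (Fin n → ℝ) × (Fin n → ℝ),
      twoPhaseF n θ 0 r s b p.1 p.2 p.1 p.2 = 0 :=
    fun p => twoPhaseF_diag n θ r s b p.1 p.2
  constructor
  · apply Real.sSup_nonpos
    rintro _ ⟨p, hp, rfl⟩
    dsimp only
    by_cases hbdd : BddBelow ((fun q => twoPhaseF n θ 0 r s b p.1 p.2 q.1 q.2) '' K)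
    · calc _ ≤ twoPhaseF n θ 0 r s b p.1 p.2 p.1 p.2 := csInf_le hbdd ⟨p, hp, rfl⟩
        _ = 0 := hdiag p
    · rw [Real.sInf_of_not_bddBelow hbdd]
  · apply Real.sInf_nonneg
    rintro _ ⟨q, hq, rfl⟩
    dsimp only
    by_cases hbdd : BddAbove ((fun p => twoPhaseF n θ 0 r s b p.1 p.2 q.1 q.2) '' K)
    · calc (0 : ℝ) = twoPhaseF n θ 0 r s b q.1 q.2 q.1 q.2 := (hdiag q).symm
        _ ≤ _ := le_csSup hbdd ⟨q, hq, rfl⟩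
    · rw [Real.sSup_of_not_bddAbove hbdd]
end
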